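/- arXiv:1412.2196 — 2 statements merged into one kernel-verified Lean document; each statement's English description precedes it below -/
import Mathlib

section
/- Suppose (A*, E*) minimizes rank(A) + λf(E) subject to X = A + E (original R-PCA with arbitrary noise function f). Then (Z*, E*) with Z* = (A*)†A* minimizes ‖Z‖_* + λf(E) subject to X − E = (X − E)Z (relaxed R-LRR). Conversely, if (Z*, E*) minimizes the relaxed R-LRR, then (X − E*, E*) minimizes the original R-PCA. -/
open Matrix

def IsMoorePenrose {m n : ℕ} (A : Matrix (Fin m) (Fin n) ℝ) (B : Matrix (Fin n) (Fin m) ℝ) : Prop :=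
  A * B * A = A ∧ B * A * B = B ∧ (A * B)ᵀ = A * B ∧ (B * A)ᵀ = B * A

noncomputable def nuclearNorm {p q : ℕ} (M : Matrix (Fin p) (Fin q) ℝ) : ℝ :=
  ∑ i, Real.sqrt ((Matrix.isHermitian_conjTranspose_mul_self M).eigenvalues i)

/-!
Both directions reduce to `min {‖Z‖_* : A = A Z} = rank A`, because the two constraints only differ
by writing `A = X - E`. If `A = A Z`, then `Zᵀ` fixes the row space `V` of `A`, so on `V`
`‖x‖² = ⟪Z x, x⟫ ≤ ‖Z x‖² = ⟪x, ZᵀZ x⟫`; a min–max count then gives at least `dim V = rank A`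
eigenvalues `≥ 1` of `ZᵀZ`, hence `‖Z‖_* ≥ rank A`. The bound is attained by any orthogonal
projection onto the row space of `A`, such as `A†A`: its eigenvalues are `0` and `1`, so its
nuclear norm is its rank.
-/

namespace Matrix

variable {n : Type*} [Fintype n]

lemma star_mulVec_eq_vecMul (U : Matrix n n ℝ) (x : n → ℝ) : star U *ᵥ x = x ᵥ* U := by
  rw [star_eq_conjTranspose, conjTranspose_eq_transpose_of_trivial, mulVec_transpose]

variable [DecidableEq n]

lemma dotProduct_self_eq_sum_sq_star_mulVec (U : unitary (Matrix n n ℝ)) (x : n → ℝ) :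
    x ⬝ᵥ x = ∑ i, (star (U : Matrix n n ℝ) *ᵥ x) i ^ 2 := by
  have h := dotProduct_mulVec (star (U : Matrix n n ℝ) *ᵥ x) (star (U : Matrix n n ℝ)) x
  rw [star_mulVec_eq_vecMul, vecMul_vecMul, ← Unitary.coe_star, Unitary.coe_mul_star_self,
    vecMul_one] at h
  rw [star_mulVec_eq_vecMul, ← h, dotProduct]
  simp only [sq]

lemma IsHermitian.dotProduct_mulVec_eq_sum {S : Matrix n n ℝ} (hS : S.IsHermitian) (x : n → ℝ) :
    x ⬝ᵥ S *ᵥ x =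
      ∑ i, hS.eigenvalues i * (star (hS.eigenvectorUnitary : Matrix n n ℝ) *ᵥ x) i ^ 2 := by
  conv_lhs => rw [hS.spectral_theorem]
  rw [Unitary.conjStarAlgAut_apply, RCLike.ofReal_real_eq_id, Function.id_comp,
    ← mulVec_mulVec, ← mulVec_mulVec, dotProduct_mulVec, ← star_mulVec_eq_vecMul]
  simp only [dotProduct, mulVec_diagonal]
  exact Finset.sum_congr rfl fun i _ => by ring

theorem IsHermitian.finrank_le_card_eigenvalues_ge {S : Matrix n n ℝ} (hS : S.IsHermitian)
    (c : ℝ) (V : Submodule ℝ (n → ℝ)) (hV : ∀ x ∈ V, c * (x ⬝ᵥ x) ≤ x ⬝ᵥ S *ᵥ x) :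
    Module.finrank ℝ V ≤ Fintype.card {i // c ≤ hS.eigenvalues i} := by
  -- on `V`, a vector is determined by its coordinates along the eigenvectors with eigenvalue `≥ c`
  let coords : V →ₗ[ℝ] {i // c ≤ hS.eigenvalues i} → ℝ :=
    LinearMap.funLeft ℝ ℝ Subtype.val ∘ₗ
      (star (hS.eigenvectorUnitary : Matrix n n ℝ)).mulVecLin ∘ₗ V.subtype
  suffices Function.Injective coords by
    simpa using LinearMap.finrank_le_finrank_of_injective this
  rw [← LinearMap.ker_eq_bot, Submodule.eq_bot_iff]
  rintro ⟨x, hx⟩ hker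
  have hquad := hV x hx
  rw [hS.dotProduct_mulVec_eq_sum, dotProduct_self_eq_sum_sq_star_mulVec, Finset.mul_sum] at hquad
  set y := star (hS.eigenvectorUnitary : Matrix n n ℝ) *ᵥ x
  have hy : ∀ i, c ≤ hS.eigenvalues i → y i = 0 := fun i hi => congrFun hker ⟨i, hi⟩
  have hterm : ∀ i, 0 ≤ (c - hS.eigenvalues i) * y i ^ 2 := fun i => by
    by_cases hi : c ≤ hS.eigenvalues i
    · simp [hy i hi]
    · exact mul_nonneg (by linarith) (sq_nonneg _)
  have hzero : ∑ i, (c - hS.eigenvalues i) * y i ^ 2 = 0 := by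
    refine le_antisymm ?_ (Finset.sum_nonneg fun i _ => hterm i)
    simp only [sub_mul, Finset.sum_sub_distrib]
    linarith
  have hy0 : y = 0 := by
    ext i
    by_cases hi : c ≤ hS.eigenvalues i
    · exact hy i hi
    · have := (Finset.sum_eq_zero_iff_of_nonneg fun i _ => hterm i).1 hzero i (Finset.mem_univ i)
      simpa [sub_eq_zero, (lt_of_not_ge hi).ne'] using this
  have hx0 : x = 0 := calc
    x = ((hS.eigenvectorUnitary : Matrix n n ℝ) * star (hS.eigenvectorUnitary : Matrix n n ℝ)) *ᵥ x := by
      rw [← Unitary.coe_star, Unitary.coe_mul_star_self, one_mulVec]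
    _ = (hS.eigenvectorUnitary : Matrix n n ℝ) *ᵥ y := (mulVec_mulVec _ _ _).symm
    _ = 0 := by rw [hy0, mulVec_zero]
  simp [hx0]

lemma isStarProjection_diagonal {d : n → ℝ} (hd : ∀ i, IsStarProjection (d i)) :
    IsStarProjection (diagonal d) := by
  refine isStarProjection_iff'.2 ⟨?_, ?_⟩
  · simp only [diagonal_mul_diagonal, fun i => (hd i).isIdempotentElem.eq]
  · rw [star_eq_conjTranspose, diagonal_conjTranspose, star_trivial]

omit [DecidableEq n] in
lemma mul_eq_self_of_conjTranspose_mul_self_mul_eq {m : Type*} [Fintype m] {A : Matrix m n ℝ}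
    {P : Matrix n n ℝ} (hP : IsSelfAdjoint P) (h : Aᴴ * A * P = Aᴴ * A) : A * P = A := by
  have h' : P * (Aᴴ * A) = Aᴴ * A := by
    simpa only [conjTranspose_mul, conjTranspose_conjTranspose, ← star_eq_conjTranspose P,
      hP.star_eq] using congr_arg conjTranspose h
  rw [Matrix.mul_assoc] at h
  have : (A - A * P)ᴴ * (A - A * P) = 0 := by
    simp only [conjTranspose_sub, conjTranspose_mul, ← star_eq_conjTranspose P, hP.star_eq,
      Matrix.sub_mul, Matrix.mul_sub, Matrix.mul_assoc, h, h', sub_self]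
  exact (sub_eq_zero.1 (conjTranspose_mul_self_eq_zero.1 this)).symm

-- `P` is the orthogonal projection onto the row space of `A`, built from the eigenvectors of `Aᴴ * A`.
theorem exists_isStarProjection_mul_eq {m : Type*} [Fintype m] (A : Matrix m n ℝ) :
    ∃ P : Matrix n n ℝ, IsStarProjection P ∧ A * P = A ∧ P.rank ≤ A.rank := by
  have hS := isHermitian_conjTranspose_mul_self A
  set d : n → ℝ := fun i => if hS.eigenvalues i = 0 then 0 else 1
  set P := Unitary.conjStarAlgAut ℝ _ hS.eigenvectorUnitary (diagonal d)
  have hP : IsStarProjection P := by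
    refine (isStarProjection_diagonal fun i => ?_).map _
    simp only [d]
    split_ifs
    exacts [IsStarProjection.zero ℝ, IsStarProjection.one ℝ]
  have hSP : Aᴴ * A * P = Aᴴ * A := by
    conv_lhs => rw [hS.spectral_theorem]
    rw [← map_mul, diagonal_mul_diagonal]
    conv_rhs => rw [hS.spectral_theorem]
    congr 2
    ext i
    simp only [Function.comp_apply, d]
    split_ifs with h
    · rw [h]; simp
    · rw [mul_one]
  refine ⟨P, hP, mul_eq_self_of_conjTranspose_mul_self_mul_eq hP.isSelfAdjoint hSP, ?_⟩
  calc P.rank ≤ (diagonal d).rank :=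
        (rank_mul_le_left _ _).trans (rank_mul_le_right _ _)
    _ = A.rank := by
      rw [rank_diagonal, ← rank_conjTranspose_mul_self A, hS.rank_eq_card_non_zero_eigs]
      exact Fintype.card_congr <| Equiv.subtypeEquivRight fun i => by
        simp only [d]
        split_ifs with h <;> simp only [h, ne_eq, not_true_eq_false, one_ne_zero, not_false_eq_true]

end Matrix

theorem IsMoorePenrose.isStarProjection_mul {m n : ℕ} {A : Matrix (Fin m) (Fin n) ℝ}
    {B : Matrix (Fin n) (Fin m) ℝ} (h : IsMoorePenrose A B) : IsStarProjection (B * A) := by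
  obtain ⟨-, hBAB, -, hBA⟩ := h
  refine isStarProjection_iff'.2 ⟨?_, ?_⟩
  · rw [← Matrix.mul_assoc, hBAB]
  · rw [star_eq_conjTranspose, conjTranspose_eq_transpose_of_trivial, hBA]

theorem nuclearNorm_eq_rank_of_isStarProjection {n : ℕ} {P : Matrix (Fin n) (Fin n) ℝ}
    (hP : IsStarProjection P) : nuclearNorm P = P.rank := by
  have hH : P.IsHermitian := hP.isSelfAdjoint
  have hPP : Pᴴ * P = P := by
    rw [← star_eq_conjTranspose, hP.isSelfAdjoint.star_eq, hP.isIdempotentElem.eq]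
  have heig : (isHermitian_conjTranspose_mul_self P).eigenvalues = hH.eigenvalues := by
    have key : ∀ (M : Matrix (Fin n) (Fin n) ℝ) (hM : M.IsHermitian), M = P →
        hM.eigenvalues = hH.eigenvalues := by
      rintro _ _ rfl
      rfl
    exact key _ _ hPP
  have h01 : ∀ i, hH.eigenvalues i = 0 ∨ hH.eigenvalues i = 1 := fun i =>
    hP.isIdempotentElem.spectrum_subset ℝ (hH.eigenvalues_mem_spectrum_real i)
  rw [nuclearNorm, heig, hH.rank_eq_card_non_zero_eigs, Fintype.card_subtype, ← Finset.sum_boole]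
  refine Finset.sum_congr rfl fun i _ => ?_
  rcases h01 i with h | h <;> simp [h]

theorem rank_le_nuclearNorm_of_eq_mul {m n : ℕ} {A : Matrix (Fin m) (Fin n) ℝ}
    {Z : Matrix (Fin n) (Fin n) ℝ} (h : A = A * Z) : (A.rank : ℝ) ≤ nuclearNorm Z := by
  have hS := isHermitian_conjTranspose_mul_self Z
  have hfix : ∀ x ∈ LinearMap.range Aᵀ.mulVecLin, Zᵀ *ᵥ x = x := by
    rintro _ ⟨y, rfl⟩
    rw [mulVecLin_apply, mulVec_mulVec, ← transpose_mul, ← h]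
  have hquad : ∀ x ∈ LinearMap.range Aᵀ.mulVecLin, 1 * (x ⬝ᵥ x) ≤ x ⬝ᵥ (Zᴴ * Z) *ᵥ x := by
    intro x hx
    have hZx : Z *ᵥ x ⬝ᵥ x = x ⬝ᵥ x := by
      rw [dotProduct_comm, dotProduct_mulVec, ← mulVec_transpose, hfix x hx]
    have hSx : x ⬝ᵥ (Zᴴ * Z) *ᵥ x = Z *ᵥ x ⬝ᵥ Z *ᵥ x := by
      rw [← mulVec_mulVec, dotProduct_mulVec, conjTranspose_eq_transpose_of_trivial, vecMul_transpose]
    have := dotProduct_star_self_nonneg (Z *ᵥ x - x)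
    simp only [star_trivial, sub_dotProduct, dotProduct_sub, dotProduct_comm x (Z *ᵥ x), hZx] at this
    linarith
  calc (A.rank : ℝ) = Module.finrank ℝ (LinearMap.range Aᵀ.mulVecLin) := by
        rw [← rank_transpose]; rfl
    _ ≤ Fintype.card {i // 1 ≤ hS.eigenvalues i} := by
        exact_mod_cast hS.finrank_le_card_eigenvalues_ge 1 _ hquad
    _ = ∑ i, if 1 ≤ hS.eigenvalues i then (1 : ℝ) else 0 := by
        rw [Finset.sum_boole, Fintype.card_subtype]
    _ ≤ nuclearNorm Z := Finset.sum_le_sum fun i _ => by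
        split_ifs with hi
        · exact Real.one_le_sqrt.2 hi
        · exact Real.sqrt_nonneg _

theorem stmt_15_general {m n : ℕ} (X : Matrix (Fin m) (Fin n) ℝ) (lam : ℝ)
    (f : Matrix (Fin m) (Fin n) ℝ → ℝ) :
    (∀ (A E : Matrix (Fin m) (Fin n) ℝ) (B : Matrix (Fin n) (Fin m) ℝ),
      IsMoorePenrose A B → X = A + E →
      (∀ A' E' : Matrix (Fin m) (Fin n) ℝ, X = A' + E' →
        (A.rank : ℝ) + lam * f E ≤ (A'.rank : ℝ) + lam * f E') →
      (X - E = (X - E) * (B * A) ∧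
       ∀ (Z' : Matrix (Fin n) (Fin n) ℝ) (E' : Matrix (Fin m) (Fin n) ℝ),
         X - E' = (X - E') * Z' →
         nuclearNorm (B * A) + lam * f E ≤ nuclearNorm Z' + lam * f E')) ∧
    (∀ (Z : Matrix (Fin n) (Fin n) ℝ) (E : Matrix (Fin m) (Fin n) ℝ),
      X - E = (X - E) * Z →
      (∀ (Z' : Matrix (Fin n) (Fin n) ℝ) (E' : Matrix (Fin m) (Fin n) ℝ),
        X - E' = (X - E') * Z' →
        nuclearNorm Z + lam * f E ≤ nuclearNorm Z' + lam * f E') →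
      (X = (X - E) + E ∧
       ∀ A' E' : Matrix (Fin m) (Fin n) ℝ, X = A' + E' →
         ((X - E).rank : ℝ) + lam * f E ≤ (A'.rank : ℝ) + lam * f E')) := by
  refine ⟨fun A E B hAB hX hopt => ?_, fun Z E hZ hopt => ⟨(sub_add_cancel X E).symm, ?_⟩⟩
  · have hA : X - E = A := by rw [hX, add_sub_cancel_right]
    refine ⟨by rw [hA, ← Matrix.mul_assoc, hAB.1], fun Z' E' hZ' => ?_⟩
    have hrank := hopt (X - E') E' (sub_add_cancel X E').symm
    have hZ'_ge := rank_le_nuclearNorm_of_eq_mul hZ'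
    have hBA : nuclearNorm (B * A) ≤ A.rank := by
      rw [nuclearNorm_eq_rank_of_isStarProjection hAB.isStarProjection_mul]
      exact_mod_cast rank_mul_le_right B A
    linarith
  · intro A' E' hX'
    obtain ⟨P, hP, hA'P, hPrank⟩ := exists_isStarProjection_mul_eq A'
    have hA' : X - E' = A' := by rw [hX', add_sub_cancel_right]
    have hZP := hopt P E' (by rw [hA', hA'P])
    have hZ_ge := rank_le_nuclearNorm_of_eq_mul hZ
    have hP_le : nuclearNorm P ≤ A'.rank := by
      rw [nuclearNorm_eq_rank_of_isStarProjection hP]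
      exact_mod_cast hPrank
    linarith

theorem stmt_15 {m n : ℕ} (X : Matrix (Fin m) (Fin n) ℝ) (lam : ℝ) (hlam : 0 < lam)
    (f : Matrix (Fin m) (Fin n) ℝ → ℝ) :
    (∀ (A E : Matrix (Fin m) (Fin n) ℝ) (B : Matrix (Fin n) (Fin m) ℝ),
      IsMoorePenrose A B → X = A + E →
      (∀ A' E' : Matrix (Fin m) (Fin n) ℝ, X = A' + E' →
        (A.rank : ℝ) + lam * f E ≤ (A'.rank : ℝ) + lam * f E') →
      (X - E = (X - E) * (B * A) ∧
       ∀ (Z' : Matrix (Fin n) (Fin n) ℝ) (E' : Matrix (Fin m) (Fin n) ℝ),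
         X - E' = (X - E') * Z' →
         nuclearNorm (B * A) + lam * f E ≤ nuclearNorm Z' + lam * f E')) ∧
    (∀ (Z : Matrix (Fin n) (Fin n) ℝ) (E : Matrix (Fin m) (Fin n) ℝ),
      X - E = (X - E) * Z →
      (∀ (Z' : Matrix (Fin n) (Fin n) ℝ) (E' : Matrix (Fin m) (Fin n) ℝ),
        X - E' = (X - E') * Z' →
        nuclearNorm Z + lam * f E ≤ nuclearNorm Z' + lam * f E') →
      (X = (X - E) + E ∧
       ∀ A' E' : Matrix (Fin m) (Fin n) ℝ, X = A' + E' →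
         ((X - E).rank : ℝ) + lam * f E ≤ (A'.rank : ℝ) + lam * f E')) :=
  stmt_15_general X lam f
end

section
/- Suppose (A*, E*) minimizes rank(A) + λf(E) subject to X = A + E. Then for any S with V_{A*}ᵀS = 0 (where A* = U*Σ*V*ᵀ is the skinny SVD), the pair ((A*)†A* + SV_{A*}ᵀ, E*) minimizes rank(Z) + λf(E) subject to X − E = (X − E)Z. Conversely, if (Z*, E*) minimizes the latter problem then (X − E*, E*) minimizes the former. -/
open Matrix

/-!
For a fixed `E`, the inner problem `min {rank Z : X - E = (X - E) * Z}` has optimal value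
`rank (X - E)`: the constraint forces `rank (X - E) ≤ rank Z`, and the value is attained by a
projection onto the row space of `X - E`, in particular by `A†A + T Vᵀ` when `A = X - E = U S Vᵀ`.
Eliminating `Z` therefore turns the second problem into the first one.
-/

namespace Matrix

variable {K : Type*} [Field K] {m n r : Type*} [Fintype n] [Fintype r]

theorem rank_le_rank_of_eq_self_mul {A : Matrix m n K} {Z : Matrix n n K} (h : A = A * Z) :
    A.rank ≤ Z.rank := by
  rw [h]
  exact rank_mul_le_right A Z

variable [Fintype m]

theorem exists_mul_eq_self_rank_eq [DecidableEq m] [DecidableEq n] (A : Matrix m n K) :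
    ∃ Z : Matrix n n K, A * Z = A ∧ Z.rank = A.rank := by
  set W := LinearMap.range Aᵀ.mulVecLin
  obtain ⟨W', hW⟩ := W.exists_isCompl
  set P := LinearMap.toMatrix' (W.projection W' hW)
  have hP : P * Aᵀ = Aᵀ := by
    apply toLin'.injective
    refine LinearMap.ext fun v => ?_
    simp only [toLin'_mul, toLin'_toMatrix', P, LinearMap.comp_apply]
    exact Submodule.projection_apply_of_mem_left hW (LinearMap.mem_range_self _ v)
  refine ⟨Pᵀ, by simpa using congrArg transpose hP, ?_⟩
  rw [rank_transpose, ← rank_transpose A, rank, ← toLin'_apply', toLin'_toMatrix',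
    Submodule.range_projection]
  rfl

theorem mul_mul_add_mul_eq_self {A : Matrix m n K} {B : Matrix n m K} {T : Matrix n r K}
    (W : Matrix r n K) (hB : A * B * A = A) (hT : A * T = 0) : A * (B * A + T * W) = A := by
  rw [Matrix.mul_add, ← Matrix.mul_assoc, ← Matrix.mul_assoc, hB, hT, Matrix.zero_mul, add_zero]

theorem rank_mul_mul_transpose_eq_card [DecidableEq r] {U : Matrix m r K} {S : Matrix r r K}
    {V : Matrix n r K} (hU : Uᵀ * U = 1) (hV : Vᵀ * V = 1) (hS : IsUnit S) :
    (U * S * Vᵀ).rank = Fintype.card r := by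
  apply le_antisymm ((rank_mul_le_right _ _).trans (rank_le_card_height Vᵀ))
  have hS_eq : Uᵀ * (U * S * Vᵀ) * V = S := by
    simp only [Matrix.mul_assoc, hV]
    rw [← Matrix.mul_assoc, hU, Matrix.one_mul, Matrix.mul_one]
  calc Fintype.card r = S.rank := (rank_of_isUnit S hS).symm
    _ = (Uᵀ * (U * S * Vᵀ) * V).rank := by rw [hS_eq]
    _ ≤ (Uᵀ * (U * S * Vᵀ)).rank := rank_mul_le_left _ _
    _ ≤ (U * S * Vᵀ).rank := rank_mul_le_right _ _

theorem rank_mul_add_mul_transpose_le (B : Matrix n m K) (U : Matrix m r K) (S : Matrix r r K)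
    (V : Matrix n r K) (T : Matrix n r K) :
    (B * (U * S * Vᵀ) + T * Vᵀ).rank ≤ Fintype.card r := by
  have h_factor : B * (U * S * Vᵀ) + T * Vᵀ = (B * U * S + T) * Vᵀ := by
    simp only [Matrix.add_mul, Matrix.mul_assoc]
  rw [h_factor]
  exact (rank_mul_le_right _ _).trans (rank_le_card_height Vᵀ)

end Matrix

theorem stmt_16_general {m n : ℕ} (X : Matrix (Fin m) (Fin n) ℝ) (lam : ℝ)
    (f : Matrix (Fin m) (Fin n) ℝ → ℝ) :
    (∀ (r : ℕ) (A E : Matrix (Fin m) (Fin n) ℝ) (B : Matrix (Fin n) (Fin m) ℝ)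
       (U : Matrix (Fin m) (Fin r) ℝ) (V : Matrix (Fin n) (Fin r) ℝ)
       (S : Matrix (Fin r) (Fin r) ℝ),
      Uᵀ * U = 1 → Vᵀ * V = 1 →
      (∃ d : Fin r → ℝ, S = Matrix.diagonal d ∧ ∀ i, 0 < d i) →
      A = U * S * Vᵀ → IsMoorePenrose A B → X = A + E →
      (∀ A' E' : Matrix (Fin m) (Fin n) ℝ, X = A' + E' →
        (A.rank : ℝ) + lam * f E ≤ (A'.rank : ℝ) + lam * f E') →
      ∀ T : Matrix (Fin n) (Fin r) ℝ, Vᵀ * T = 0 →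
      (X - E = (X - E) * (B * A + T * Vᵀ) ∧
       ∀ (Z' : Matrix (Fin n) (Fin n) ℝ) (E' : Matrix (Fin m) (Fin n) ℝ),
         X - E' = (X - E') * Z' →
         ((B * A + T * Vᵀ).rank : ℝ) + lam * f E ≤ (Z'.rank : ℝ) + lam * f E')) ∧
    (∀ (Z : Matrix (Fin n) (Fin n) ℝ) (E : Matrix (Fin m) (Fin n) ℝ),
      X - E = (X - E) * Z →
      (∀ (Z' : Matrix (Fin n) (Fin n) ℝ) (E' : Matrix (Fin m) (Fin n) ℝ),
        X - E' = (X - E') * Z' →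
        (Z.rank : ℝ) + lam * f E ≤ (Z'.rank : ℝ) + lam * f E') →
      (X = (X - E) + E ∧
       ∀ A' E' : Matrix (Fin m) (Fin n) ℝ, X = A' + E' →
         ((X - E).rank : ℝ) + lam * f E ≤ (A'.rank : ℝ) + lam * f E')) := by
  constructor
  · rintro r A E B U V S hU hV ⟨d, rfl, hd⟩ rfl hMP hX hopt T hT
    have hS : IsUnit (diagonal d) := isUnit_diagonal.2 (Pi.isUnit_iff.2 fun i => (hd i).ne'.isUnit)
    have hAT : U * diagonal d * Vᵀ * T = 0 := by simp only [Matrix.mul_assoc, hT, Matrix.mul_zero]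
    have hrank := (rank_mul_add_mul_transpose_le B U (diagonal d) V T).trans
      (rank_mul_mul_transpose_eq_card hU hV hS).ge
    rw [show X - E = U * diagonal d * Vᵀ by rw [hX, add_sub_cancel_right]]
    refine ⟨(mul_mul_add_mul_eq_self Vᵀ hMP.1 hAT).symm, fun Z' E' hZ' => ?_⟩
    calc ((B * (U * diagonal d * Vᵀ) + T * Vᵀ).rank : ℝ) + lam * f E
        ≤ (U * diagonal d * Vᵀ).rank + lam * f E := by gcongr
      _ ≤ (X - E').rank + lam * f E' := hopt _ _ (sub_add_cancel X E').symm
      _ ≤ Z'.rank + lam * f E' := by gcongr; exact rank_le_rank_of_eq_self_mul hZ'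
  · intro Z E hZ hopt
    refine ⟨(sub_add_cancel X E).symm, fun A' E' hX => ?_⟩
    obtain ⟨Z', hZ', hZ'_rank⟩ := exists_mul_eq_self_rank_eq A'
    have hXE' : X - E' = A' := by rw [hX, add_sub_cancel_right]
    calc ((X - E).rank : ℝ) + lam * f E ≤ Z.rank + lam * f E := by
          gcongr; exact rank_le_rank_of_eq_self_mul hZ
      _ ≤ Z'.rank + lam * f E' := hopt Z' E' (by rw [hXE', hZ'])
      _ = A'.rank + lam * f E' := by rw [hZ'_rank]

theorem stmt_16 {m n : ℕ} (X : Matrix (Fin m) (Fin n) ℝ) (lam : ℝ) (hlam : 0 < lam)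
    (f : Matrix (Fin m) (Fin n) ℝ → ℝ) :
    (∀ (r : ℕ) (A E : Matrix (Fin m) (Fin n) ℝ) (B : Matrix (Fin n) (Fin m) ℝ)
       (U : Matrix (Fin m) (Fin r) ℝ) (V : Matrix (Fin n) (Fin r) ℝ)
       (S : Matrix (Fin r) (Fin r) ℝ),
      Uᵀ * U = 1 → Vᵀ * V = 1 →
      (∃ d : Fin r → ℝ, S = Matrix.diagonal d ∧ ∀ i, 0 < d i) →
      A = U * S * Vᵀ → IsMoorePenrose A B → X = A + E →
      (∀ A' E' : Matrix (Fin m) (Fin n) ℝ, X = A' + E' →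
        (A.rank : ℝ) + lam * f E ≤ (A'.rank : ℝ) + lam * f E') →
      ∀ T : Matrix (Fin n) (Fin r) ℝ, Vᵀ * T = 0 →
      (X - E = (X - E) * (B * A + T * Vᵀ) ∧
       ∀ (Z' : Matrix (Fin n) (Fin n) ℝ) (E' : Matrix (Fin m) (Fin n) ℝ),
         X - E' = (X - E') * Z' →
         ((B * A + T * Vᵀ).rank : ℝ) + lam * f E ≤ (Z'.rank : ℝ) + lam * f E')) ∧
    (∀ (Z : Matrix (Fin n) (Fin n) ℝ) (E : Matrix (Fin m) (Fin n) ℝ),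
      X - E = (X - E) * Z →
      (∀ (Z' : Matrix (Fin n) (Fin n) ℝ) (E' : Matrix (Fin m) (Fin n) ℝ),
        X - E' = (X - E') * Z' →
        (Z.rank : ℝ) + lam * f E ≤ (Z'.rank : ℝ) + lam * f E') →
      (X = (X - E) + E ∧
       ∀ A' E' : Matrix (Fin m) (Fin n) ℝ, X = A' + E' →
         ((X - E).rank : ℝ) + lam * f E ≤ (A'.rank : ℝ) + lam * f E')) :=
  stmt_16_general X lam f
end
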